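/- arXiv:1901.09885 — 4 statements merged into one kernel-verified Lean document; each statement's English description precedes it below -/
import Mathlib

section
/- Suppose [α]_{K×K} is in the SLS regime, so that δ_{ij} + δ_{jk} ≥ δ_{ik} for all distinct i,j,k. Let π_1, ..., π_n (n > 1) be pairwise disjoint cycles (cyclic sequences of distinct indices) in [K], and let π_{1,...,n} denote their concatenation into a single cycle, and let π = (π_1(1) → π_2(1) → ... → π_n(1) ↺) be the cycle on their head elements. Then Δ_{π_{1,...,n}} ≤ Δ_{π_1} + Δ_{π_2} + ... + Δ_{π_n} + Δ_π, where for a cycle σ = (i_1 → ... → i_M ↺) of length M > 1, Δ_σ = δ_{i_1 i_2} + δ_{i_2 i_3} + ... + δ_{i_M i_1}. -/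
/-- The weight of a cycle, represented as a list of user indices interpreted cyclically:
`Δ = Σ_m δ (L m) (L (m+1 mod len))`. -/
def cycWeight {K : ℕ} (δ : Fin K → Fin K → ℝ) (L : List (Fin K)) : ℝ :=
  ((L.zip (L.rotate 1)).map (fun p => δ p.1 p.2)).sum

namespace CombineAux

variable {β : Type*}

/-- Path sum: sum of `d` over consecutive pairs. -/
def pSum (d : β → β → ℝ) : List β → ℝ
  | a :: b :: l => d a b + pSum d (b :: l)
  | _ => 0

@[simp] lemma pSum_nil (d : β → β → ℝ) : pSum d [] = 0 := rfl
@[simp] lemma pSum_single (d : β → β → ℝ) (a : β) : pSum d [a] = 0 := rfl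
@[simp] lemma pSum_cons2 (d : β → β → ℝ) (a b : β) (l : List β) :
    pSum d (a :: b :: l) = d a b + pSum d (b :: l) := rfl

/-- Head with default. -/
def headD (d0 : β) (L : List β) : β := L.head?.getD d0
/-- Last with default. -/
def lastD (d0 : β) (L : List β) : β := L.getLast?.getD d0

@[simp] lemma headD_cons (d0 a : β) (t : List β) : headD d0 (a :: t) = a := rfl
@[simp] lemma lastD_singleton (d0 a : β) : lastD d0 [a] = a := rfl
@[simp] lemma lastD_cons_cons (d0 a b : β) (t : List β) :
    lastD d0 (a :: b :: t) = lastD d0 (b :: t) := by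
  simp [lastD, List.getLast?_cons_cons]

lemma headD_mem (d0 : β) {L : List β} (h : L ≠ []) : headD d0 L ∈ L := by
  cases L with
  | nil => exact absurd rfl h
  | cons a t => simp

lemma lastD_mem (d0 : β) {L : List β} (h : L ≠ []) : lastD d0 L ∈ L := by
  induction L with
  | nil => exact absurd rfl h
  | cons a t ih =>
    cases t with
    | nil => simp
    | cons b r =>
      rw [lastD_cons_cons]
      exact List.mem_cons_of_mem _ (ih (by simp))

lemma headD_append (d0 : β) {L : List β} (M : List β) (h : L ≠ []) :
    headD d0 (L ++ M) = headD d0 L := by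
  cases L with
  | nil => exact absurd rfl h
  | cons a t => rfl

lemma lastD_append (d0 : β) (L : List β) {M : List β} (h : M ≠ []) :
    lastD d0 (L ++ M) = lastD d0 M := by
  simp only [lastD, List.getLast?_append]
  cases M with
  | nil => exact absurd rfl h
  | cons b r =>
    have : (b :: r).getLast? = some ((b :: r).getLast (by simp)) :=
      List.getLast?_eq_getLast _
    rw [this]; rfl

lemma headD_ne_lastD (d0 : β) {L : List β} (hlen : 2 ≤ L.length) (hnd : L.Nodup) :
    headD d0 L ≠ lastD d0 L := by
  match L with
  | a :: b :: t =>
    rw [headD_cons, lastD_cons_cons]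
    intro h
    have hm : lastD d0 (b :: t) ∈ b :: t := lastD_mem d0 (by simp)
    rw [← h] at hm
    exact (List.nodup_cons.mp hnd).1 hm

/-- Key computation: zip of a list with its tail extended by `c`. -/
lemma zip_tail_sum (d : β → β → ℝ) :
    ∀ (t : List β) (a c : β),
      (((a :: t).zip (t ++ [c])).map (fun p => d p.1 p.2)).sum
        = pSum d (a :: t) + d (lastD c (a :: t)) c := by
  intro t
  induction t with
  | nil => intro a c; simp [lastD]
  | cons b r ih =>
    intro a c
    have := ih b c
    simp only [List.cons_append, List.zip_cons_cons, List.map_cons, List.sum_cons, this,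
      pSum_cons2, lastD_cons_cons]
    ring

lemma lastD_indep (c d0 : β) {L : List β} (h : L ≠ []) : lastD c L = lastD d0 L := by
  cases L with
  | nil => exact absurd rfl h
  | cons a t =>
    rw [lastD, lastD, List.getLast?_eq_getLast (by simp : (a :: t) ≠ [])]
    rfl

lemma cycWeight_eq {K : ℕ} (δ : Fin K → Fin K → ℝ) (d0 : Fin K) {L : List (Fin K)}
    (h : L ≠ []) :
    cycWeight δ L = pSum δ L + δ (lastD d0 L) (headD d0 L) := by
  cases L with
  | nil => exact absurd rfl h
  | cons a t =>
    have hrot : (a :: t).rotate 1 = t ++ [a] := by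
      rw [List.rotate_cons_succ, List.rotate_zero]
    have htl : (a :: t).tail = t := rfl
    rw [cycWeight, hrot, zip_tail_sum δ t a a, headD_cons,
      lastD_indep a d0 (by simp : (a :: t) ≠ [])]

lemma pSum_append (d : β → β → ℝ) (d0 : β) :
    ∀ (A : List β) {B : List β}, A ≠ [] → B ≠ [] →
      pSum d (A ++ B) = pSum d A + d (lastD d0 A) (headD d0 B) + pSum d B := by
  intro A
  induction A with
  | nil => intro B h _; exact absurd rfl h
  | cons a t ih =>
    intro B _ hB
    cases t with
    | nil =>
      cases B with
      | nil => exact absurd rfl hB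
      | cons b r => simp [lastD]
    | cons a2 r =>
      have := ih (B := B) (by simp) hB
      simp only [List.cons_append] at this ⊢
      rw [pSum_cons2, this, pSum_cons2, lastD_cons_cons]
      ring

/-- Sum of the linking terms between consecutive lists. -/
def linkSum (d : β → β → ℝ) (d0 : β) : List (List β) → ℝ
  | A :: B :: r => d (lastD d0 A) (headD d0 B) + linkSum d d0 (B :: r)
  | _ => 0

@[simp] lemma linkSum_nil (d : β → β → ℝ) (d0 : β) : linkSum d d0 [] = 0 := rfl
@[simp] lemma linkSum_single (d : β → β → ℝ) (d0 : β) (A : List β) :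
    linkSum d d0 [A] = 0 := rfl
@[simp] lemma linkSum_cons2 (d : β → β → ℝ) (d0 : β) (A B : List β) (r : List (List β)) :
    linkSum d d0 (A :: B :: r) = d (lastD d0 A) (headD d0 B) + linkSum d d0 (B :: r) := rfl

lemma flatten_ne_nil {Ls : List (List β)} (h : Ls ≠ []) (hne : ∀ L ∈ Ls, L ≠ []) :
    Ls.flatten ≠ [] := by
  cases Ls with
  | nil => exact absurd rfl h
  | cons A r =>
    have hA := hne A (by simp)
    cases A with
    | nil => exact absurd rfl hA
    | cons a t => simp

lemma flatten_pSum (d : β → β → ℝ) (d0 : β) :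
    ∀ (Ls : List (List β)), (∀ L ∈ Ls, L ≠ []) →
      pSum d Ls.flatten = (Ls.map (pSum d)).sum + linkSum d d0 Ls := by
  intro Ls
  induction Ls with
  | nil => intro _; simp
  | cons A r ih =>
    intro hne
    cases r with
    | nil => simp
    | cons B s =>
      have hA : A ≠ [] := hne A (by simp)
      have hBs : ∀ L ∈ B :: s, L ≠ [] := fun L hL => hne L (List.mem_cons_of_mem _ hL)
      have hfl : (B :: s).flatten ≠ [] := flatten_ne_nil (by simp) hBs
      have hhd : headD d0 (B :: s).flatten = headD d0 B := by
        have h1 : (B :: s).flatten = B ++ s.flatten := rfl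
        rw [h1, headD_append d0 _ (hBs B (by simp))]
      rw [List.flatten_cons, pSum_append d d0 A hA hfl, ih hBs, hhd]
      simp only [List.map_cons, List.sum_cons, linkSum_cons2]
      ring

lemma lastD_flatten (d0 : β) :
    ∀ (Ls : List (List β)), (∀ L ∈ Ls, L ≠ []) → Ls ≠ [] →
      lastD d0 Ls.flatten = lastD d0 (Ls.getLast?.getD []) := by
  intro Ls
  induction Ls with
  | nil => intro _ h; exact absurd rfl h
  | cons A r ih =>
    intro hne _
    cases r with
    | nil => simp [lastD]
    | cons B s =>
      have hBs : ∀ L ∈ B :: s, L ≠ [] := fun L hL => hne L (List.mem_cons_of_mem _ hL)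
      have hfl : (B :: s).flatten ≠ [] := flatten_ne_nil (by simp) hBs
      have h1 : (A :: B :: s).flatten = A ++ (B :: s).flatten := rfl
      rw [h1, lastD_append d0 _ hfl, ih hBs (by simp)]
      congr 1 <;> simp [List.getLast?_cons_cons]

lemma sum_map_add (f g : β → ℝ) (l : List β) :
    (l.map (fun x => f x + g x)).sum = (l.map f).sum + (l.map g).sum := by
  induction l with
  | nil => simp
  | cons a t ih => simp [ih]; ring

/-- The chain inequality: replacing every link `last A → head B` by the detour
`last A → head A → head B` only increases the sum. -/
lemma chain_ineq (d : β → β → ℝ) (d0 : β)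
    (htri : ∀ a b c : β, a ≠ b → b ≠ c → a ≠ c → d a c ≤ d a b + d b c) :
    ∀ (Ls : List (List β)) (z : β),
      (∀ L ∈ Ls, 2 ≤ L.length) → (∀ L ∈ Ls, L.Nodup) →
      Ls.Pairwise (fun A B => ∀ x ∈ A, x ∉ B) →
      (∀ L ∈ Ls, z ∉ L) →
      linkSum d d0 Ls + d (lastD d0 (Ls.getLast?.getD [])) z
        ≤ (Ls.map (fun L => d (lastD d0 L) (headD d0 L))).sum
          + pSum d (Ls.map (headD d0)) + d (headD d0 (Ls.getLast?.getD [])) z := by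
  intro Ls
  induction Ls with
  | nil => intro z _ _ _ _; simp [headD, lastD]
  | cons A r ih =>
    intro z hlen hnd hpair hz
    have hA2 : 2 ≤ A.length := hlen A (by simp)
    have hAne : A ≠ [] := by cases A <;> simp_all
    have hAnd : A.Nodup := hnd A (by simp)
    have hhl : lastD d0 A ≠ headD d0 A :=
      fun h => headD_ne_lastD d0 hA2 hAnd h.symm
    cases r with
    | nil =>
      simp only [linkSum_single, List.map_cons, List.map_nil, List.sum_cons, List.sum_nil,
        pSum_single, zero_add, add_zero]
      have hzA := hz A (by simp)
      have h1 : lastD d0 A ≠ z := fun h => hzA (h ▸ lastD_mem d0 hAne)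
      have h2 : headD d0 A ≠ z := fun h => hzA (h ▸ headD_mem d0 hAne)
      have := htri (lastD d0 A) (headD d0 A) z hhl h2 h1
      have hgl : ([A] : List (List β)).getLast?.getD [] = A := rfl
      rw [hgl]
      linarith
    | cons B s =>
      have hBne : B ≠ [] := by
        have := hlen B (by simp); cases B <;> simp_all
      have hdisjAB : ∀ x ∈ A, x ∉ B := (List.pairwise_cons.mp hpair).1 B (by simp)
      have h1 : lastD d0 A ≠ headD d0 B :=
        fun h => hdisjAB _ (lastD_mem d0 hAne) (h ▸ headD_mem d0 hBne)
      have h2 : headD d0 A ≠ headD d0 B :=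
        fun h => hdisjAB _ (headD_mem d0 hAne) (h ▸ headD_mem d0 hBne)
      have htriA := htri (lastD d0 A) (headD d0 A) (headD d0 B) hhl h2 h1
      have hrec := ih z (fun L hL => hlen L (List.mem_cons_of_mem _ hL))
        (fun L hL => hnd L (List.mem_cons_of_mem _ hL))
        (List.pairwise_cons.mp hpair).2
        (fun L hL => hz L (List.mem_cons_of_mem _ hL))
      have hgl : ((A :: B :: s) : List (List β)).getLast?.getD []
          = ((B :: s) : List (List β)).getLast?.getD [] := by
        simp [List.getLast?_cons_cons]
      rw [linkSum_cons2, hgl]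
      have hmap : ((A :: B :: s).map (headD d0)) = headD d0 A :: headD d0 B :: s.map (headD d0) :=
        rfl
      rw [hmap]
      simp only [List.map_cons, List.sum_cons, pSum_cons2] at hrec ⊢
      linarith

/-- Main list-level lemma. -/
lemma combine_main {K : ℕ} (δ : Fin K → Fin K → ℝ) (d0 : Fin K)
    (htri : ∀ a b c : Fin K, a ≠ b → b ≠ c → a ≠ c → δ a c ≤ δ a b + δ b c)
    (Ls : List (List (Fin K))) (hn2 : 2 ≤ Ls.length)
    (hlen : ∀ L ∈ Ls, 2 ≤ L.length) (hnd : ∀ L ∈ Ls, L.Nodup)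
    (hpair : Ls.Pairwise (fun A B => ∀ x ∈ A, x ∉ B)) :
    cycWeight δ Ls.flatten ≤ (Ls.map (cycWeight δ)).sum + cycWeight δ (Ls.map (headD d0)) := by
  match Ls, hn2 with
  | A :: B :: s, _ =>
    have hAne : A ≠ [] := by have := hlen A (by simp); cases A <;> simp_all
    have hBne : B ≠ [] := by have := hlen B (by simp); cases B <;> simp_all
    have hrne : ∀ L ∈ B :: s, L ≠ [] := by
      intro L hL
      have := hlen L (List.mem_cons_of_mem _ hL)
      cases L <;> simp_all
    have hallne : ∀ L ∈ A :: B :: s, L ≠ [] := by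
      intro L hL
      rcases List.mem_cons.mp hL with h | h
      · exact h ▸ hAne
      · exact hrne L h
    have hflne : (A :: B :: s).flatten ≠ [] := flatten_ne_nil (by simp) hallne
    have hrflne : (B :: s).flatten ≠ [] := flatten_ne_nil (by simp) hrne
    -- head of the flattened list is head of A
    have hheadfl : headD d0 (A :: B :: s).flatten = headD d0 A := by
      have h1 : (A :: B :: s).flatten = A ++ (B :: s).flatten := rfl
      rw [h1, headD_append d0 _ hAne]
    -- decompose LHS
    rw [cycWeight_eq δ d0 hflne, flatten_pSum δ d0 _ hallne,
      lastD_flatten d0 _ hallne (by simp), hheadfl]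
    -- decompose sum of cycle weights
    have hmapeq : (A :: B :: s).map (cycWeight δ)
        = (A :: B :: s).map (fun L => pSum δ L + δ (lastD d0 L) (headD d0 L)) :=
      List.map_congr_left (fun L hL => cycWeight_eq δ d0 (hallne L hL))
    rw [hmapeq, sum_map_add]
    -- decompose cycWeight of heads
    have hheadsne : (A :: B :: s).map (headD d0) ≠ [] := by simp
    rw [cycWeight_eq δ d0 hheadsne]
    have hheadhead : headD d0 ((A :: B :: s).map (headD d0)) = headD d0 A := rfl
    have hheadlast : lastD d0 ((A :: B :: s).map (headD d0))
        = headD d0 ((A :: B :: s).getLast?.getD []) := by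
      have hgl : (A :: B :: s).getLast? = some ((A :: B :: s).getLast (by simp)) :=
        List.getLast?_eq_getLast _
      simp only [lastD, List.getLast?_map, hgl, Option.map_some, Option.getD_some]
    rw [hheadhead, hheadlast]
    -- the remaining inequality
    have hgl2 : ((A :: B :: s) : List (List (Fin K))).getLast?.getD []
        = ((B :: s) : List (List (Fin K))).getLast?.getD [] := by
      simp [List.getLast?_cons_cons]
    rw [hgl2]
    -- split off the first link
    have hdisjAB : ∀ x ∈ A, x ∉ B := (List.pairwise_cons.mp hpair).1 B (by simp)
    have hA2 : 2 ≤ A.length := hlen A (by simp)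
    have hAnd : A.Nodup := hnd A (by simp)
    have hhl : lastD d0 A ≠ headD d0 A := fun h => headD_ne_lastD d0 hA2 hAnd h.symm
    have h1 : lastD d0 A ≠ headD d0 B :=
      fun h => hdisjAB _ (lastD_mem d0 hAne) (h ▸ headD_mem d0 hBne)
    have h2 : headD d0 A ≠ headD d0 B :=
      fun h => hdisjAB _ (headD_mem d0 hAne) (h ▸ headD_mem d0 hBne)
    have htriA := htri (lastD d0 A) (headD d0 A) (headD d0 B) hhl h2 h1
    -- chain inequality on the tail, ending at the head of A
    have hzA : ∀ L ∈ B :: s, headD d0 A ∉ L := by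
      intro L hL hmem
      exact (List.pairwise_cons.mp hpair).1 L hL _ (headD_mem d0 hAne) hmem
    have hrec := chain_ineq δ d0 htri (B :: s) (headD d0 A)
      (fun L hL => hlen L (List.mem_cons_of_mem _ hL))
      (fun L hL => hnd L (List.mem_cons_of_mem _ hL))
      (List.pairwise_cons.mp hpair).2
      hzA
    have hmap2 : ((A :: B :: s).map (headD d0))
        = headD d0 A :: headD d0 B :: s.map (headD d0) := rfl
    rw [hmap2]
    simp only [List.map_cons, List.sum_cons, pSum_cons2, linkSum_cons2] at hrec ⊢
    linarith

end CombineAux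

open CombineAux in
/-- Combining disjoint cycles in the SLS regime: the weight of the combined cycle
is at most the sum of the individual cycle weights plus the weight of the cycle
formed by the head elements. -/
theorem combine_cycles_sls (K n : ℕ) (hn : 1 < n)
    (α : Fin K → Fin K → ℝ)
    (hnn : ∀ i j, 0 ≤ α i j)
    (hSLS : ∀ i j k : Fin K, i ≠ j → i ≠ k →
      α i i ≥ max (α i j) (max (α k i) (α i k + α j i - α j k)))
    (δ : Fin K → Fin K → ℝ)
    (hδ : ∀ i j : Fin K, i ≠ j → δ i j = α i i - α j i)
    (π : Fin n → List (Fin K))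
    (hlen : ∀ i, 2 ≤ (π i).length)
    (hnodup : ∀ i, (π i).Nodup)
    (hdisj : ∀ i j, i ≠ j → ∀ x, x ∈ π i → x ∉ π j)
    (hd : Fin n → Fin K)
    (hhead : ∀ i, (π i).head? = some (hd i)) :
    cycWeight δ (List.ofFn π).flatten ≤
      (∑ i : Fin n, cycWeight δ (π i)) + cycWeight δ (List.ofFn hd) := by
  have htri : ∀ a b c : Fin K, a ≠ b → b ≠ c → a ≠ c → δ a c ≤ δ a b + δ b c := by
    intro a b c hab hbc hac
    have h := hSLS b c a hbc (fun h => hab h.symm)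
    have h2 : α b b ≥ α b a + α c b - α c a :=
      le_trans (le_max_of_le_right (le_max_right _ _)) h
    rw [hδ a c hac, hδ a b hab, hδ b c hbc]
    linarith
  have hn0 : (0 : ℕ) < n := by omega
  set d0 : Fin K := hd ⟨0, hn0⟩ with hd0
  have key := combine_main δ d0 htri (List.ofFn π)
    (by simp [List.length_ofFn]; omega)
    (by intro L hL
        rw [List.mem_ofFn] at hL
        obtain ⟨i, rfl⟩ := hL
        exact hlen i)
    (by intro L hL
        rw [List.mem_ofFn] at hL
        obtain ⟨i, rfl⟩ := hL
        exact hnodup i)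
    (by rw [List.pairwise_ofFn]
        intro i j hij
        exact hdisj i j (Fin.ne_of_lt hij))
  have hheads : (List.ofFn π).map (headD d0) = List.ofFn hd := by
    rw [List.map_ofFn]
    congr 1
    funext i
    simp [Function.comp, headD, hhead i]
  have hsum : (∑ i : Fin n, cycWeight δ (π i)) = ((List.ofFn π).map (cycWeight δ)).sum := by
    rw [List.map_ofFn, List.sum_ofFn]
    rfl
  rw [hsum, ← hheads]
  exact key
end

section
/- Define the network 𝒩^{[n,ν]} on K = 2^n users (indexed by {0,1}^n or [2^n]) by α_{ii} = 1 and α_{ij} = 1 − (2^{p−1}/2^n)·ν for i ≠ j, where p is the level of the closest common ancestor of leaves i and j in the complete binary tree of depth n (equivalently, p = n − (length of the longest common prefix of the binary expansions of i−1 and j−1)). Then for any 0 ≤ ν ≤ 1, the matrix [α] lies in the SLS regime: α_{ii} ≥ max(α_{ij}, α_{ki}) and α_{ii} + α_{jk} ≥ α_{ij} + α_{ki} for all distinct i,j,k. -/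
/-- The tree network `𝒩^{[n,ν]}` on `K = 2^n` users, with `α_{ii} = 1` and
`α_{ij} = 1 - (2^{p-1}/2^n)·ν` where `p = log2(i ^^^ j) + 1` is the level of the
closest common ancestor of leaves `i` and `j`, lies in the SLS regime for `0 ≤ ν ≤ 1`. -/
theorem tree_network_in_sls (n : ℕ) (ν : ℝ) (hν0 : 0 ≤ ν) (hν1 : ν ≤ 1)
    (p : Fin (2 ^ n) → Fin (2 ^ n) → ℕ)
    (hp : ∀ i j : Fin (2 ^ n), i ≠ j → p i j = Nat.log2 (i.val ^^^ j.val) + 1)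
    (α : Fin (2 ^ n) → Fin (2 ^ n) → ℝ)
    (hα : ∀ i j : Fin (2 ^ n), α i j =
      if i = j then 1 else 1 - ((2 : ℝ) ^ (p i j - 1) / 2 ^ n) * ν) :
    ∀ i j k : Fin (2 ^ n), i ≠ j → j ≠ k → i ≠ k →
      α i i ≥ max (α i j) (α k i) ∧ α i i + α j k ≥ α i j + α k i := by
  intro i j k hij hjk hik
  have hki : k ≠ i := hik.symm
  -- xor values are nonzero
  have hx : ∀ a b : Fin (2 ^ n), a ≠ b → a.val ^^^ b.val ≠ 0 := by
    intro a b hab h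
    exact hab (Fin.ext (xor_eq_zero_iff.mp h))
  have hxij := hx i j hij
  have hxjk := hx j k hjk
  have hxik := hx i k hik
  have hxki := hx k i hki
  -- abbreviations for logs
  set lij := Nat.log2 (i.val ^^^ j.val) with hlij
  set ljk := Nat.log2 (j.val ^^^ k.val) with hljk
  set lik := Nat.log2 (i.val ^^^ k.val) with hlik
  -- ultrametric: ljk ≤ max lij lik
  have hkey : ljk ≤ max lij lik := by
    have h1 : i.val ^^^ j.val < 2 ^ (max lij lik + 1) := by
      refine (Nat.log2_lt hxij).mp ?_
      exact Nat.lt_succ_of_le (le_max_left _ _)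
    have h2 : i.val ^^^ k.val < 2 ^ (max lij lik + 1) := by
      refine (Nat.log2_lt hxik).mp ?_
      exact Nat.lt_succ_of_le (le_max_right _ _)
    have h3 : j.val ^^^ k.val < 2 ^ (max lij lik + 1) := by
      have he : (i.val ^^^ j.val) ^^^ (i.val ^^^ k.val) = j.val ^^^ k.val := by
        rw [Nat.xor_comm i.val j.val, Nat.xor_assoc, ← Nat.xor_assoc i.val,
          Nat.xor_self, Nat.zero_xor]
      rw [← he]
      exact Nat.xor_lt_two_pow h1 h2
    exact Nat.lt_succ_iff.mp ((Nat.log2_lt hxjk).mpr h3)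
  have hki' : Nat.log2 (k.val ^^^ i.val) = lik := by
    rw [Nat.xor_comm]
  -- rewrite α values
  have hαii : α i i = 1 := by rw [hα]; simp
  have hαij : α i j = 1 - ((2 : ℝ) ^ lij / 2 ^ n) * ν := by
    rw [hα, if_neg hij, hp i j hij]; norm_num; exact Or.inl hlij.symm
  have hαjk : α j k = 1 - ((2 : ℝ) ^ ljk / 2 ^ n) * ν := by
    rw [hα, if_neg hjk, hp j k hjk]; norm_num; exact Or.inl hljk.symm
  have hαki : α k i = 1 - ((2 : ℝ) ^ lik / 2 ^ n) * ν := by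
    rw [hα, if_neg hki, hp k i hki, hki']; norm_num
  have h2n : (0 : ℝ) < 2 ^ n := by positivity
  have htij : 0 ≤ ((2 : ℝ) ^ lij / 2 ^ n) * ν := by positivity
  have htki : 0 ≤ ((2 : ℝ) ^ lik / 2 ^ n) * ν := by positivity
  constructor
  · rw [hαii, hαij, hαki]
    apply max_le <;> linarith
  · -- need 2^ljk ≤ 2^lij + 2^lik in ℝ
    have hpow : (2 : ℝ) ^ ljk ≤ (2 : ℝ) ^ lij + (2 : ℝ) ^ lik := by
      rcases max_cases lij lik with ⟨hm, _⟩ | ⟨hm, _⟩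
      · have : (2 : ℝ) ^ ljk ≤ (2 : ℝ) ^ lij :=
          pow_le_pow_right₀ (by norm_num) (hkey.trans hm.le)
        nlinarith [pow_pos (by norm_num : (0:ℝ) < 2) lik]
      · have : (2 : ℝ) ^ ljk ≤ (2 : ℝ) ^ lik :=
          pow_le_pow_right₀ (by norm_num) (hkey.trans hm.le)
        nlinarith [pow_pos (by norm_num : (0:ℝ) < 2) lij]
    rw [hαii, hαij, hαjk, hαki]
    have hdiv : (2 : ℝ) ^ ljk / 2 ^ n ≤ ((2 : ℝ) ^ lij + (2 : ℝ) ^ lik) / 2 ^ n := by gcongr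
    have hineq := mul_le_mul_of_nonneg_right hdiv hν0
    rw [add_div, add_mul] at hineq
    linarith
end

section
/- For the full cycle π = (1 → 2 → ... → K ↺) in the tree network 𝒩^{[n,1]} with K = 2^n users labeled in tree order, the cycle weight satisfies Δ_π = Σ_{k=1}^{K−1} δ_{k,k+1} + δ_{K,1} = Σ_{ℓ=1}^{n} (1/2^{n−ℓ+1})·2^{n−ℓ} + 1/2 = n/2 + 1/2, and hence Δ_π + α_{1K} = n/2 + 1 = (1/2)log₂(K) + 1. -/
private lemma tfc_xor_even (j : ℕ) : (2*j) ^^^ (2*j+1) = 1 := by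
  have := Nat.xor_bit false j true j
  simp [Nat.bit] at this ⊢
  omega

private lemma tfc_xor_odd (j : ℕ) : (2*j+1) ^^^ (2*j+2) = 2*(j ^^^ (j+1)) + 1 := by
  have := Nat.xor_bit true j false (j+1)
  simp [Nat.bit] at this
  rw [show 2*(j+1) = 2*j+2 from by ring] at this
  exact this

private lemma tfc_log2_odd (m : ℕ) (hm : 1 ≤ m) : Nat.log2 (2*m+1) = Nat.log2 m + 1 := by
  rw [Nat.log2_eq_log_two, Nat.log2_eq_log_two]
  refine Nat.log_eq_of_pow_le_of_lt_pow ?_ ?_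
  · have := Nat.pow_log_le_self 2 (by omega : m ≠ 0)
    rw [pow_succ]; omega
  · have := Nat.lt_pow_succ_log_self (by norm_num : 1 < 2) m
    rw [pow_succ, pow_succ]; omega

private lemma tfc_log2_pred_pow (n : ℕ) (hn : 1 ≤ n) : Nat.log2 (2^n - 1) = n - 1 := by
  rw [Nat.log2_eq_log_two]
  refine Nat.log_eq_of_pow_le_of_lt_pow ?_ ?_
  · have h2 : (1:ℕ) ≤ 2^(n-1) := Nat.one_le_two_pow
    have h3 : 2*2^(n-1) = 2^n := by rw [← pow_succ']; congr 1; omega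
    omega
  · rw [show n - 1 + 1 = n from by omega]
    exact Nat.sub_lt (Nat.two_pow_pos n) one_pos

private lemma tfc_sum_pair (f : ℕ → ℕ) (M : ℕ) :
    ∑ k ∈ Finset.range (2*M), f k = ∑ j ∈ Finset.range M, (f (2*j) + f (2*j+1)) := by
  induction M with
  | zero => simp
  | succ m ih =>
    rw [show 2*(m+1) = (2*m+1)+1 from by ring, Finset.sum_range_succ,
      Finset.sum_range_succ, Finset.sum_range_succ, ih]
    ring

private lemma tfc_nat_sum (n : ℕ) :
    ∑ k ∈ Finset.range (2^n - 1), 2^(Nat.log2 (k ^^^ (k+1))) = n * 2^(n-1) := by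
  induction n with
  | zero => simp
  | succ n ih =>
    have hM : (1:ℕ) ≤ 2^n := Nat.one_le_two_pow
    have hsplit : 2^(n+1) - 1 = 2*(2^n - 1) + 1 := by
      have : 2^(n+1) = 2*2^n := by ring
      omega
    rw [hsplit, Finset.sum_range_succ, tfc_sum_pair]
    have heven : ∀ j : ℕ, 2^(Nat.log2 ((2*j) ^^^ (2*j+1))) = 1 := by
      intro j; rw [tfc_xor_even]; simp [Nat.log2]; rfl
    have hodd : ∀ j : ℕ, 2^(Nat.log2 ((2*j+1) ^^^ (2*j+1+1))) = 2 * 2^(Nat.log2 (j ^^^ (j+1))) := by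
      intro j
      have hne : j ^^^ (j+1) ≠ 0 := fun h => by have := xor_eq_zero_iff.mp h; omega
      rw [show 2*j+1+1 = 2*j+2 from rfl, tfc_xor_odd, tfc_log2_odd _ (by omega), pow_succ]
      ring
    have hterm : 2^(Nat.log2 ((2*(2^n-1)) ^^^ (2*(2^n-1)+1))) = 1 := heven _
    rw [hterm]
    calc (∑ j ∈ Finset.range (2^n - 1),
            (2^(Nat.log2 ((2*j) ^^^ (2*j+1))) + 2^(Nat.log2 ((2*j+1) ^^^ (2*j+1+1))))) + 1
        = (∑ j ∈ Finset.range (2^n - 1), (1 + 2 * 2^(Nat.log2 (j ^^^ (j+1))))) + 1 := by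
          congr 1
          refine Finset.sum_congr rfl fun j _ => ?_
          rw [heven j, hodd j]
      _ = (2^n - 1) + 2 * (n * 2^(n-1)) + 1 := by
          rw [Finset.sum_add_distrib, ← Finset.mul_sum, ih]
          simp [Finset.sum_const, Finset.card_range]
      _ = (n+1) * 2^(n+1-1) := by
          rcases Nat.eq_zero_or_pos n with h | h
          · subst h; simp
          · have h2 : 2 * 2^(n-1) = 2^n := by rw [← pow_succ']; congr 1; omega
            have : 2 * (n * 2^(n-1)) = n * 2^n := by rw [← h2]; ring
            rw [this]
            have : (n+1) * 2^(n+1-1) = n * 2^n + 2^n := by simp; ring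
            omega

/-- For the full cycle `(1 → 2 → ⋯ → K ↺)` in the tree network `𝒩^{[n,1]}` with
`K = 2^n` users labeled in tree order (here 0-indexed by `Fin (2^n)`), and
`δ_{ij} = 2^{p(i,j)-1}/2^n` with `p(i,j) = log2(i ^^^ j) + 1`, the cycle weight is
`Δ_π = Σ_k δ_{k,k+1} = n/2 + 1/2`, and `Δ_π + α_{1K} = n/2 + 1` where
`α_{1K} = 1 - δ` between the first and last users. -/
theorem tree_full_cycle_weight (n : ℕ) (hn : 1 ≤ n)
    (δ : Fin (2 ^ n) → Fin (2 ^ n) → ℝ)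
    (hδ : ∀ i j : Fin (2 ^ n), i ≠ j →
      δ i j = (2 : ℝ) ^ ((Nat.log2 (i.val ^^^ j.val) + 1) - 1) / 2 ^ n) :
    (∑ k : Fin (2 ^ n), δ k (k + ⟨1, Nat.one_lt_two_pow_iff.mpr (by omega)⟩))
      = (n : ℝ) / 2 + 1 / 2 ∧
    (∑ k : Fin (2 ^ n), δ k (k + ⟨1, Nat.one_lt_two_pow_iff.mpr (by omega)⟩))
      + (1 - δ ⟨0, by positivity⟩ ⟨2 ^ n - 1, by have := Nat.one_lt_two_pow_iff.mpr (show n ≠ 0 by omega); omega⟩) = (n : ℝ) / 2 + 1 := by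
  have hM : 2 ≤ 2^n := by
    calc 2 = 2^1 := rfl
    _ ≤ 2^n := Nat.pow_le_pow_right (by norm_num) hn
  have hpow : (2:ℝ)^n ≠ 0 := by positivity
  have hhalf : (2:ℝ)^(n-1) / 2^n = 1/2 := by
    have : (2:ℝ)^n = 2 * 2^(n-1) := by
      rw [← pow_succ']; congr 1; omega
    rw [this]; field_simp
  -- value of each term
  have hval : ∀ k : Fin (2^n), δ k (k + ⟨1, Nat.one_lt_two_pow_iff.mpr (by omega)⟩)
      = (2:ℝ)^(Nat.log2 (k.val ^^^ ((k.val + 1) % 2^n))) / 2^n := by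
    intro k
    have hv : (k + (⟨1, Nat.one_lt_two_pow_iff.mpr (by omega)⟩ : Fin (2^n))).val = (k.val + 1) % 2^n := by
      simp [Fin.add_def]
    have hne : k ≠ k + ⟨1, Nat.one_lt_two_pow_iff.mpr (by omega)⟩ := by
      intro h
      have := congrArg Fin.val h
      rw [hv] at this
      rcases Nat.lt_or_ge (k.val + 1) (2^n) with h1 | h1
      · rw [Nat.mod_eq_of_lt h1] at this; omega
      · have hk : k.val < 2^n := k.isLt
        have : (k.val + 1) % 2^n = 0 := by
          have : k.val + 1 = 2^n := by omega
          simp [this]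
        omega
    rw [hδ _ _ hne, hv]
    simp
  have hsum : (∑ k : Fin (2^n), δ k (k + ⟨1, Nat.one_lt_two_pow_iff.mpr (by omega)⟩))
      = (n : ℝ) / 2 + 1 / 2 := by
    rw [Finset.sum_congr rfl (fun k _ => hval k)]
    rw [Fin.sum_univ_eq_sum_range (fun i => (2:ℝ)^(Nat.log2 (i ^^^ ((i + 1) % 2^n))) / 2^n)]
    rw [show 2^n = (2^n - 1) + 1 from by omega, Finset.sum_range_succ,
      show (2^n - 1) + 1 = 2^n from by omega]
    have hlast : (2:ℝ)^(Nat.log2 ((2^n-1) ^^^ 2^n % 2^n)) / 2^n = 1/2 := by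
      rw [Nat.mod_self, Nat.xor_zero, tfc_log2_pred_pow n hn]
      exact hhalf
    rw [hlast]
    have hmain : (∑ i ∈ Finset.range (2^n-1), (2:ℝ)^(Nat.log2 (i ^^^ ((i + 1) % 2^n))) / 2^n)
        = (n : ℝ) / 2 := by
      have hcongr : ∀ i ∈ Finset.range (2^n-1),
          (2:ℝ)^(Nat.log2 (i ^^^ ((i + 1) % 2^n))) / 2^n
            = ((2^(Nat.log2 (i ^^^ (i+1))) : ℕ) : ℝ) / 2^n := by
        intro i hi
        rw [Finset.mem_range] at hi
        rw [Nat.mod_eq_of_lt (by omega)]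
        push_cast
        ring
      rw [Finset.sum_congr rfl hcongr, ← Finset.sum_div, ← Nat.cast_sum,
        tfc_nat_sum n]
      have h2 : (2:ℝ)^n = 2 * 2^(n-1) := by rw [← pow_succ']; congr 1; omega
      push_cast
      rw [h2]
      have : (2:ℝ)^(n-1) ≠ 0 := by positivity
      field_simp
    rw [hmain]
  refine ⟨hsum, ?_⟩
  have hδ0 : δ ⟨0, by positivity⟩ ⟨2 ^ n - 1, by have := Nat.one_lt_two_pow_iff.mpr (show n ≠ 0 by omega); omega⟩ = 1/2 := by
    rw [hδ _ _ (by intro h; have := congrArg Fin.val h; simp at this; omega)]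
    simp only [Nat.zero_xor]
    rw [show Nat.log2 (2^n - 1) + 1 - 1 = Nat.log2 (2^n - 1) from by omega,
      tfc_log2_pred_pow n hn]
    exact hhalf
  rw [hsum, hδ0]
  ring
end

section
/- In the strict SLS regime where δ_{ki} + δ_{ij} > δ_{kj} holds for all pairwise distinct i,j,k, the following holds: if d ∈ ℝ_+^K satisfies all cycle bounds (Σ_{k∈π} d_k ≤ Δ_π for all cycles π, with Δ_π = Σ_m δ_{π(m)π(m+1)} for non-trivial π and Δ_{(i↺)} = α_{ii}), and d attains equality on a cycle π_o = (i_1 → ... → i_M ↺) of length M > 2 with d_{i_M} = 0, then a contradiction results: one derives δ_{i_{M−1} i_M} + δ_{i_M i_1} ≤ δ_{i_{M−1} i_1}, contradicting strictness. -/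
/-- `Δ_σ` for the cyclic sequence `σ`, with edge weights `f`. -/
def cycleSum {α β : Type*} [AddCommMonoid β] {n : ℕ} [NeZero n] (f : α → α → β)
    (σ : Fin n → α) : β :=
  ∑ m, f (σ m) (σ (m + 1))

theorem cycleSum_add_shortcut {α β : Type*} [AddCommMonoid β] {n : ℕ} (f : α → α → β)
    (σ : Fin (n + 2) → α) :
    cycleSum f σ + f (σ (Fin.last n).castSucc) (σ 0) =
      cycleSum f (σ ∘ Fin.castSucc) + (f (σ (Fin.last n).castSucc) (σ (Fin.last (n + 1))) +
        f (σ (Fin.last (n + 1))) (σ 0)) := by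
  simp only [cycleSum, Fin.sum_univ_castSucc, Function.comp_apply, Fin.last_add_one,
    Fin.coeSucc_eq_succ, Fin.succ_castSucc, Fin.succ_last, Fin.castSucc_zero]
  abel

theorem add_le_shortcut_of_cycleSum_eq {α : Type*} {n : ℕ} {d : α → ℝ} {f : α → α → ℝ}
    {σ : Fin (n + 2) → α} (hshort : ∑ m, d (σ (Fin.castSucc m)) ≤ cycleSum f (σ ∘ Fin.castSucc))
    (htight : ∑ m, d (σ m) = cycleSum f σ) (hzero : d (σ (Fin.last (n + 1))) = 0) :
    f (σ (Fin.last n).castSucc) (σ (Fin.last (n + 1))) + f (σ (Fin.last (n + 1))) (σ 0) ≤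
      f (σ (Fin.last n).castSucc) (σ 0) := by
  rw [Fin.sum_univ_castSucc, hzero, add_zero] at htight
  linarith [cycleSum_add_shortcut f σ]

/-- In the strict SLS regime (`δ_{ki} + δ_{ij} > δ_{kj}` for pairwise distinct
`i,j,k`), no point `d ≥ 0` satisfying all cycle bounds can attain equality on a cycle
of length `M > 2` while having `d = 0` at the last user of that cycle. -/
theorem strict_sls_tight_long_cycle_contradiction (K : ℕ)
    (δ : Fin K → Fin K → ℝ)
    (hstrict : ∀ i j k : Fin K, i ≠ j → j ≠ k → i ≠ k → δ k i + δ i j > δ k j)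
    (d : Fin K → ℝ)
    (hcyc : ∀ (M : ℕ) (hM : 2 ≤ M) (σ : Fin M → Fin K), Function.Injective σ →
      ∑ m : Fin M, d (σ m) ≤ ∑ m : Fin M, δ (σ m) (σ (m + ⟨1, hM⟩)))
    (M : ℕ) (hM : 2 < M) (σ : Fin M → Fin K) (hσ : Function.Injective σ)
    (htight : ∑ m : Fin M, d (σ m) = ∑ m : Fin M, δ (σ m) (σ (m + ⟨1, by omega⟩)))
    (hzero : d (σ ⟨M - 1, by omega⟩) = 0) :
    False := by
  obtain ⟨n, rfl⟩ : ∃ n, M = n + 3 := ⟨M - 3, by omega⟩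
  have hshort := hcyc (n + 2) (by omega) (σ ∘ Fin.castSucc) (hσ.comp (Fin.castSucc_injective _))
  simp only [Fin.mk_one] at hshort htight
  have hle := add_le_shortcut_of_cycleSum_eq hshort htight hzero
  have hlt := hstrict (σ (Fin.last (n + 2))) (σ 0) (σ (Fin.last (n + 1)).castSucc)
    (hσ.ne (Fin.last_pos.ne')) (hσ.ne (by simp [Fin.ext_iff])) (hσ.ne (by simp [Fin.ext_iff]))
  exact lt_irrefl _ (hle.trans_lt hlt)
end
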